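/- Let (A,↘,↗,↖,↙) be a finite-dimensional quadri-algebra over a field of characteristic zero and let r ∈ A⊗A be skew-symmetric and nondegenerate (so the induced linear map r : A* → A is invertible). Then r is a solution of the Q-equation in A if and only if the bilinear form ω on A defined by ω(x,y) = ⟨r⁻¹(x), y⟩ satisfies ω(z, x≻y) − ω(x, y↙z) + ω(y, z∧x) = 0 and ω(z, x≺y) + ω(x, y∨z) − ω(y, z↗x) = 0 for all x,y,z ∈ A. -/

import Mathlib

/-!
Pair both sides of each tensor equation with `s x ⊗ s y ⊗ s z`. Since `r (s x) = x` and, by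
skew-symmetry, `σ(r) (s x) = -x`, the three kinds of terms `r₁₂∘r₁₃`, `r₁₃∘r₂₃`, `r₂₃∘r₁₂`
become `ω(x, y∘z)`, `ω(z, x∘y)` and `-ω(y, z∘x)`. As `s` is onto `A*` and product functionals
separate the points of `A ⊗ A ⊗ A` (use a basis), the tensor equations are equivalent to these
scalar identities.
-/

open TensorProduct LinearMap Module

/-- Quadri-algebra axioms for the four products ↘ (`dse`), ↗ (`dne`), ↖ (`dnw`), ↙ (`dsw`). -/
def IsQuadri {K A : Type*} [Field K] [AddCommGroup A] [Module K A]
    (dse dne dnw dsw : A →ₗ[K] A →ₗ[K] A) : Prop :=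
  (∀ x y z : A, dnw (dnw x y) z = dnw x (dse y z + dne y z + dnw y z + dsw y z)) ∧
  (∀ x y z : A, dnw (dne x y) z = dne x (dnw y z + dsw y z)) ∧
  (∀ x y z : A, dne (dne x y + dnw x y) z = dne x (dne y z + dse y z)) ∧
  (∀ x y z : A, dnw (dsw x y) z = dsw x (dne y z + dnw y z)) ∧
  (∀ x y z : A, dnw (dse x y) z = dse x (dnw y z)) ∧
  (∀ x y z : A, dne (dse x y + dsw x y) z = dse x (dne y z)) ∧
  (∀ x y z : A, dsw (dnw x y + dsw x y) z = dsw x (dse y z + dsw y z)) ∧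
  (∀ x y z : A, dsw (dne x y + dse x y) z = dse x (dsw y z)) ∧
  (∀ x y z : A, dse (dse x y + dne x y + dnw x y + dsw x y) z = dse x (dse y z))

/-- `r₁₂ ∘ r₁₃` for `r ∈ A ⊗ A`: `Σ (aᵢ ∘ aⱼ) ⊗ bᵢ ⊗ bⱼ`. -/
noncomputable def tprod12_13 {K A : Type*} [Field K] [AddCommGroup A] [Module K A]
    (m : A →ₗ[K] A →ₗ[K] A) (r : A ⊗[K] A) : A ⊗[K] (A ⊗[K] A) :=
  (TensorProduct.map (TensorProduct.lift m) LinearMap.id)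
    ((TensorProduct.tensorTensorTensorComm K A A A A) (r ⊗ₜ[K] r))

/-- `r₁₃ ∘ r₂₃` for `r ∈ A ⊗ A`: `Σ aᵢ ⊗ aⱼ ⊗ (bᵢ ∘ bⱼ)`. -/
noncomputable def tprod13_23 {K A : Type*} [Field K] [AddCommGroup A] [Module K A]
    (m : A →ₗ[K] A →ₗ[K] A) (r : A ⊗[K] A) : A ⊗[K] (A ⊗[K] A) :=
  (TensorProduct.assoc K A A A)
    ((TensorProduct.map LinearMap.id (TensorProduct.lift m))
      ((TensorProduct.tensorTensorTensorComm K A A A A) (r ⊗ₜ[K] r)))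

/-- `r₂₃ ∘ r₁₂` for `r ∈ A ⊗ A`: `Σ aᵢ ⊗ (aⱼ ∘ bᵢ) ⊗ bⱼ`. -/
noncomputable def tprod23_12 {K A : Type*} [Field K] [AddCommGroup A] [Module K A]
    (m : A →ₗ[K] A →ₗ[K] A) (r : A ⊗[K] A) : A ⊗[K] (A ⊗[K] A) :=
  (TensorProduct.map LinearMap.id (TensorProduct.comm K A A).toLinearMap)
    ((TensorProduct.assoc K A A A)
      ((TensorProduct.map LinearMap.id (TensorProduct.lift m))
        ((TensorProduct.tensorTensorTensorComm K A A A A)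
          ((TensorProduct.map (TensorProduct.comm K A A).toLinearMap LinearMap.id)
            ((TensorProduct.tensorTensorTensorComm K A A A A) (r ⊗ₜ[K] r))))))

/-- The linear map `A* → A` induced by `r ∈ A ⊗ A`, `v* ↦ Σ ⟨v*, bᵢ⟩ aᵢ`. -/
noncomputable def rmap (K A : Type*) [Field K] [AddCommGroup A] [Module K A] :
    A ⊗[K] A →ₗ[K] Module.Dual K A →ₗ[K] A :=
  (dualTensorHom K (Module.Dual K A) A) ∘ₗ
    (TensorProduct.map (Module.Dual.eval K A) LinearMap.id) ∘ₗ
    (TensorProduct.comm K A A).toLinearMap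

section TripleEval

variable {K A : Type*} [Field K] [AddCommGroup A] [Module K A]

noncomputable def tripleEval (f g h : Module.Dual K A) : A ⊗[K] (A ⊗[K] A) →ₗ[K] K :=
  TensorProduct.lift ((LinearMap.mul K K ∘ₗ f).compl₂
    (TensorProduct.lift ((LinearMap.mul K K ∘ₗ g).compl₂ h)))

@[simp] lemma tripleEval_tmul (f g h : Module.Dual K A) (a b c : A) :
    tripleEval f g h (a ⊗ₜ[K] (b ⊗ₜ[K] c)) = f a * (g b * h c) := by
  simp [tripleEval]

@[simp] lemma rmap_tmul (a b : A) (f : Module.Dual K A) :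
    rmap K A (a ⊗ₜ[K] b) f = f b • a := by
  simp [rmap]

lemma tripleEval_coord {ι : Type*} (b : Basis ι K A) (i j k : ι) (t : A ⊗[K] (A ⊗[K] A)) :
    tripleEval (b.coord i) (b.coord j) (b.coord k) t =
      (b.tensorProduct (b.tensorProduct b)).repr t (i, (j, k)) := by
  induction t with
  | zero => simp
  | add t₁ t₂ h₁ h₂ => simp only [map_add, Finsupp.add_apply, h₁, h₂]
  | tmul a u =>
    induction u with
    | zero => simp
    | add u₁ u₂ h₁ h₂ => simp only [tmul_add, map_add, Finsupp.add_apply, h₁, h₂]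
    | tmul c d => simp [Basis.tensorProduct_repr_tmul_apply, mul_comm]

lemma eq_zero_of_forall_tripleEval_eq_zero {t : A ⊗[K] (A ⊗[K] A)}
    (ht : ∀ f g h : Module.Dual K A, tripleEval f g h t = 0) : t = 0 := by
  let b := Basis.ofVectorSpace K A
  refine (b.tensorProduct (b.tensorProduct b)).repr.injective ?_
  ext ⟨i, j, k⟩
  rw [← tripleEval_coord, ht, map_zero, Finsupp.coe_zero, Pi.zero_apply]

lemma eq_iff_forall_tripleEval_eq {s : A →ₗ[K] Module.Dual K A} (hs : Function.Surjective s)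
    {t t' : A ⊗[K] (A ⊗[K] A)} :
    t = t' ↔ ∀ x y z : A, tripleEval (s x) (s y) (s z) t = tripleEval (s x) (s y) (s z) t' := by
  refine ⟨fun h _ _ _ => h ▸ rfl, fun h => sub_eq_zero.mp ?_⟩
  refine eq_zero_of_forall_tripleEval_eq_zero fun f g k => ?_
  obtain ⟨⟨x, rfl⟩, ⟨y, rfl⟩, ⟨z, rfl⟩⟩ := And.intro (hs f) (And.intro (hs g) (hs k))
  rw [map_sub, h, sub_self]

variable (m : A →ₗ[K] A →ₗ[K] A) (u v : A ⊗[K] A) (f g h : Module.Dual K A)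

lemma tripleEval_r12_r13 :
    tripleEval f g h ((TensorProduct.map (TensorProduct.lift m) LinearMap.id)
        ((TensorProduct.tensorTensorTensorComm K A A A A) (u ⊗ₜ[K] v)))
      = f (m (rmap K A u g) (rmap K A v h)) := by
  induction u with
  | zero => simp
  | add u₁ u₂ h₁ h₂ => simp only [add_tmul, map_add, LinearMap.add_apply, h₁, h₂]
  | tmul a b =>
    induction v with
    | zero => simp
    | add v₁ v₂ h₁ h₂ => simp only [tmul_add, map_add, LinearMap.add_apply, h₁, h₂]
    | tmul c d => simp [mul_comm, mul_assoc, mul_left_comm]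

lemma tripleEval_r13_r23 :
    tripleEval f g h ((TensorProduct.assoc K A A A)
      ((TensorProduct.map LinearMap.id (TensorProduct.lift m))
        ((TensorProduct.tensorTensorTensorComm K A A A A) (u ⊗ₜ[K] v))))
      = h (m (rmap K A (TensorProduct.comm K A A u) f)
          (rmap K A (TensorProduct.comm K A A v) g)) := by
  induction u with
  | zero => simp
  | add u₁ u₂ h₁ h₂ => simp only [add_tmul, map_add, LinearMap.add_apply, h₁, h₂]
  | tmul a b =>
    induction v with
    | zero => simp
    | add v₁ v₂ h₁ h₂ => simp only [tmul_add, map_add, LinearMap.add_apply, h₁, h₂]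
    | tmul c d => simp [mul_left_comm]

lemma tripleEval_r23_r12 :
    tripleEval f g h ((TensorProduct.map LinearMap.id (TensorProduct.comm K A A).toLinearMap)
      ((TensorProduct.assoc K A A A)
        ((TensorProduct.map LinearMap.id (TensorProduct.lift m))
          ((TensorProduct.tensorTensorTensorComm K A A A A)
            ((TensorProduct.map (TensorProduct.comm K A A).toLinearMap LinearMap.id)
              ((TensorProduct.tensorTensorTensorComm K A A A A) (u ⊗ₜ[K] v)))))))
      = g (m (rmap K A u h) (rmap K A (TensorProduct.comm K A A v) f)) := by
  induction u with
  | zero => simp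
  | add u₁ u₂ h₁ h₂ => simp only [add_tmul, map_add, LinearMap.add_apply, h₁, h₂]
  | tmul a b =>
    induction v with
    | zero => simp
    | add v₁ v₂ h₁ h₂ => simp only [tmul_add, map_add, LinearMap.add_apply, h₁, h₂]
    | tmul c d => simp [mul_comm]

end TripleEval

theorem Q_equation_iff_inverse_form_conditions_general
    {K A : Type*} [Field K] [AddCommGroup A] [Module K A]
    (dse dne dnw dsw : A →ₗ[K] A →ₗ[K] A)
    (r : A ⊗[K] A)
    (hskew : (TensorProduct.comm K A A) r = - r)
    (s : A →ₗ[K] Module.Dual K A)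
    (hs1 : ∀ x : A, rmap K A r (s x) = x)
    (hs2 : ∀ f : Module.Dual K A, s (rmap K A r f) = f) :
    ((tprod13_23 (dne + dse) r
        = tprod23_12 dne r + tprod23_12 dnw r + tprod12_13 dsw r) ∧
     (tprod13_23 (dnw + dsw) r
        = - tprod23_12 dne r - tprod12_13 dse r - tprod12_13 dsw r)) ↔
    ((∀ x y z : A,
        s z (dne x y + dse x y) - s x (dsw y z) + s y (dne z x + dnw z x) = 0) ∧
     (∀ x y z : A,
        s z (dnw x y + dsw x y) + s x (dse y z + dsw y z) - s y (dne z x) = 0)) := by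
  have hs : Function.Surjective s := fun f => ⟨rmap K A r f, hs2 f⟩
  have hswap (x : A) : rmap K A (TensorProduct.comm K A A r) (s x) = -x := by
    rw [hskew, map_neg, LinearMap.neg_apply, hs1]
  have eval12_13 (m : A →ₗ[K] A →ₗ[K] A) (x y z : A) :
      tripleEval (s x) (s y) (s z) (tprod12_13 m r) = s x (m y z) := by
    rw [tprod12_13, tripleEval_r12_r13, hs1, hs1]
  have eval13_23 (m : A →ₗ[K] A →ₗ[K] A) (x y z : A) :
      tripleEval (s x) (s y) (s z) (tprod13_23 m r) = s z (m x y) := by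
    rw [tprod13_23, tripleEval_r13_r23, hswap, hswap]
    simp only [map_neg, LinearMap.neg_apply, neg_neg]
  have eval23_12 (m : A →ₗ[K] A →ₗ[K] A) (x y z : A) :
      tripleEval (s x) (s y) (s z) (tprod23_12 m r) = - s y (m z x) := by
    rw [tprod23_12, tripleEval_r23_r12, hs1, hswap, map_neg, map_neg]
  simp only [eq_iff_forall_tripleEval_eq hs, map_add, map_sub, map_neg, eval12_13, eval13_23,
    eval23_12, LinearMap.add_apply]
  refine and_congr (forall₃_congr fun x y z => ?_) (forall₃_congr fun x y z => ?_) <;>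
    constructor <;> intro h <;> linear_combination h

/-- Theorem 4.3.6: for a nondegenerate skew-symmetric `r ∈ A ⊗ A` over a
finite-dimensional quadri-algebra `(A, ↘, ↗, ↖, ↙)` (with inverse `s = r⁻¹` of the
induced map `A* → A`), `r` solves the `Q`-equation iff the bilinear form
`ω(x, y) = ⟨r⁻¹ x, y⟩` satisfies `ω(z, x≻y) − ω(x, y↙z) + ω(y, z∧x) = 0` and
`ω(z, x≺y) + ω(x, y∨z) − ω(y, z↗x) = 0` for all `x, y, z`. -/
theorem Q_equation_iff_inverse_form_conditions
    {K A : Type*} [Field K] [CharZero K] [AddCommGroup A] [Module K A]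
    [FiniteDimensional K A]
    (dse dne dnw dsw : A →ₗ[K] A →ₗ[K] A)
    (hq : IsQuadri dse dne dnw dsw)
    (r : A ⊗[K] A)
    (hskew : (TensorProduct.comm K A A) r = - r)
    (s : A →ₗ[K] Module.Dual K A)
    (hs1 : ∀ x : A, rmap K A r (s x) = x)
    (hs2 : ∀ f : Module.Dual K A, s (rmap K A r f) = f) :
    ((tprod13_23 (dne + dse) r
        = tprod23_12 dne r + tprod23_12 dnw r + tprod12_13 dsw r) ∧
     (tprod13_23 (dnw + dsw) r
        = - tprod23_12 dne r - tprod12_13 dse r - tprod12_13 dsw r)) ↔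
    ((∀ x y z : A,
        s z (dne x y + dse x y) - s x (dsw y z) + s y (dne z x + dnw z x) = 0) ∧
     (∀ x y z : A,
        s z (dnw x y + dsw x y) + s x (dse y z + dsw y z) - s y (dne z x) = 0)) :=
  Q_equation_iff_inverse_form_conditions_general dse dne dnw dsw r hskew s hs1 hs2
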